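/- For any subset J ⊆ Π, the set {X_w : w ∈ W^J} is a graded cellular basis of the invariant algebra C^J := C^{W_J} (with respect to the identity anti-involution, the poset W^J ordered by length, and one-element cells), which makes C^J a graded cellular algebra in the sense of Hu–Mathas; moreover every cell module of C^J is one-dimensional. -/

import Mathlib

/-!
STATEMENT 10: For any subset J ⊆ Π, the set {X_w : w ∈ W^J} is a graded cellular basis of
the invariant algebra C^J := C^{W_J} (with respect to the identity anti-involution, the
poset W^J ordered by length, and one-element cells), which makes C^J a graded cellular
algebra in the sense of Hu–Mathas; moreover every cell module of C^J is one-dimensional.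

Modelling conventions:
* The Weyl group `W` is modelled by a Coxeter system `cs : CoxeterSystem cm W` (indexed by
  the set `B` of simple roots Π); `w0` is the longest element; for `J ⊆ Π`, `W_J` is the
  standard parabolic subgroup and `W^J` the set of minimal length left coset
  representatives.
* The coinvariant algebra `C` is modelled as a graded commutative ℂ-algebra with grading
  `𝒜` and Schubert basis `X : Basis W ℂ C` with `X w ∈ 𝒜 (2ℓ(w))`.  The group `W` acts on
  `C` by graded ℂ-algebra automorphisms, and `CJ = C^{W_J}` is the subalgebra of
  `W_J`-invariants; by Lemma cj1, `{X_w : w ∈ W^J}` is a ℂ-basis of `CJ` (hypothesis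
  `hCJspan` together with `hXmem`).
* Since all cells are singletons and `C` is commutative (so the identity is an algebra
  anti-involution), the Hu–Mathas graded cellular axioms for the basis
  `{X_w : w ∈ W^J}`, with poset `W^J` ordered by length, amount exactly to:
  (i) each basis element `X_w` (`w ∈ W^J`) is homogeneous of degree `2ℓ(w)` (the degree
      function of the graded cell datum), and
  (ii) for every `a ∈ C^J` and `w ∈ W^J` there is a *scalar* `r ∈ ℂ` (independence of the
      scalar from any tableau data is automatic, as cells are singletons; this also says
      each cell module is one-dimensional, with `a` acting by `r`) such that
      `a · X_w ≡ r · X_w` modulo the span of the higher-length basis elements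
      `{X_y : y ∈ W^J, ℓ(y) > ℓ(w)}`.
  The conclusion below states exactly (i) and (ii), together with linear independence and
  spanning, i.e. that `{X_w : w ∈ W^J}` is a basis of `C^J`.
-/

open CoxeterSystem

/-- `w` is a minimal length representative of its left coset `w * WJ`. -/
def IsMinLeftCosetRep {B W : Type*} [Group W] {cm : CoxeterMatrix B}
    (cs : CoxeterSystem cm W) (WJ : Subgroup W) (w : W) : Prop :=
  ∀ u ∈ WJ, cs.length w ≤ cs.length (w * u)

/-!
The Schubert basis is homogeneous, so the `ℂ`-coordinates of an element along `X_y` only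
see its component of degree `2ℓ(y)`, and the degree-zero part of `C` is `ℂ · X_1 = ℂ · 1`.
For `a ∈ C^J` write `a₀ = r · 1` for its degree-zero component. Then `a X_w - r X_w` has no
component in degrees `≤ 2ℓ(w)`, hence only involves `X_y` with `ℓ(y) > ℓ(w)`; being in
`C^J`, it only involves `X_y` with `y ∈ W^J`.
-/

open DirectSum

theorem GradedAlgebra.proj_mul_sub_smul_eq_zero {R A : Type*} [CommSemiring R] [Ring A]
    [Algebra R A] {𝒜 : ℕ → Submodule R A} [GradedAlgebra 𝒜] {a x : A} {r : R} {m n : ℕ}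
    (hx : x ∈ 𝒜 n) (ha : GradedAlgebra.proj 𝒜 0 a = algebraMap R A r) (hmn : m ≤ n) :
    GradedAlgebra.proj 𝒜 m (a * x - r • x) = 0 := by
  rw [map_sub, map_smul, GradedAlgebra.proj_apply, GradedAlgebra.proj_apply]
  rcases hmn.lt_or_eq with hlt | rfl
  · rw [coe_decompose_mul_of_right_mem_of_not_le 𝒜 hx hlt.not_ge,
      decompose_of_mem_ne 𝒜 hx hlt.ne', smul_zero, sub_zero]
  · rw [coe_decompose_mul_of_right_mem_of_le 𝒜 hx le_rfl, Nat.sub_self,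
      ← GradedAlgebra.proj_apply, ha, ← Algebra.smul_def, decompose_of_mem_same 𝒜 hx, sub_self]

namespace Module.Basis

section Homogeneous

variable {ι γ R A : Type*} [DecidableEq γ] [AddMonoid γ] [CommSemiring R] [Semiring A]
  [Algebra R A] {𝒜 : γ → Submodule R A} [GradedAlgebra 𝒜] {b : Basis ι R A} {deg : ι → γ}

theorem repr_proj_of_homogeneous (hb : ∀ i, b i ∈ 𝒜 (deg i)) (n : γ) (c : A) (i : ι) :
    b.repr (GradedAlgebra.proj 𝒜 n c) i = if deg i = n then b.repr c i else 0 := by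
  classical
  suffices h : b.coord i ∘ₗ GradedAlgebra.proj 𝒜 n = if deg i = n then b.coord i else 0 by
    have hc := LinearMap.congr_fun h c
    split_ifs at hc ⊢ <;> simpa using hc
  refine b.ext fun j => ?_
  by_cases hj : deg j = n
  · subst hj
    by_cases hij : deg i = deg j
    · simp [decompose_of_mem_same 𝒜 (hb j), hij]
    · have hji : j ≠ i := fun h => hij (h ▸ rfl)
      simp [decompose_of_mem_same 𝒜 (hb j), hij, hji]
  · by_cases hij : deg i = n
    · have hji : j ≠ i := fun h => hj (h ▸ hij)
      simp [decompose_of_mem_ne 𝒜 (hb j) hj, hij, hji]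
    · simp [decompose_of_mem_ne 𝒜 (hb j) hj, hij]

theorem support_repr_subset_of_mem (hb : ∀ i, b i ∈ 𝒜 (deg i)) {n : γ} {c : A}
    (hc : c ∈ 𝒜 n) : ↑(b.repr c).support ⊆ {i | deg i = n} := by
  intro i hi
  change deg i = n
  by_contra hin
  have h := b.repr_proj_of_homogeneous hb n c i
  rw [GradedAlgebra.proj_apply, decompose_of_mem_same 𝒜 hc, if_neg hin] at h
  exact Finsupp.mem_support_iff.1 hi h

end Homogeneous

theorem exists_algebraMap_eq_of_mem_zero {ι γ R A : Type*} [DecidableEq γ] [AddMonoid γ]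
    [Field R] [Ring A] [Algebra R A] {𝒜 : γ → Submodule R A} [GradedAlgebra 𝒜]
    {b : Basis ι R A} {deg : ι → γ} (hb : ∀ i, b i ∈ 𝒜 (deg i)) {i₀ : ι}
    (hdeg0 : ∀ i, deg i = 0 → i = i₀) {c : A} (hc : c ∈ 𝒜 0) :
    ∃ r : R, c = algebraMap R A r := by
  have hspan : ∀ {x : A}, x ∈ 𝒜 0 → ∃ t : R, t • b i₀ = x := fun hx =>
    Submodule.mem_span_singleton.1 <| by
      rw [← Set.image_singleton, b.mem_span_image]
      exact (b.support_repr_subset_of_mem hb hx).trans fun i => hdeg0 i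
  have : Nontrivial A := nontrivial_of_ne _ _ (b.ne_zero i₀)
  obtain ⟨s, hs⟩ := hspan (SetLike.GradedOne.one_mem (A := 𝒜))
  obtain ⟨t, rfl⟩ := hspan hc
  have hs0 : s ≠ 0 := by
    rintro rfl
    exact zero_ne_one (zero_smul R (b i₀) ▸ hs)
  refine ⟨t * s⁻¹, ?_⟩
  rw [Algebra.algebraMap_eq_smul_one, ← hs, smul_smul, mul_assoc, inv_mul_cancel₀ hs0,
    mul_one]

theorem support_repr_mul_sub_smul_subset {ι R A : Type*} [CommSemiring R] [Ring A]
    [Algebra R A] {𝒜 : ℕ → Submodule R A} [GradedAlgebra 𝒜] {b : Basis ι R A} {deg : ι → ℕ}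
    (hb : ∀ i, b i ∈ 𝒜 (deg i)) {a : A} {r : R}
    (ha : GradedAlgebra.proj 𝒜 0 a = algebraMap R A r) (i : ι) :
    ↑(b.repr (a * b i - r • b i)).support ⊆ {j | deg i < deg j} := by
  intro j hj
  by_contra hji
  have h := b.repr_proj_of_homogeneous hb (deg j) (a * b i - r • b i) j
  rw [GradedAlgebra.proj_mul_sub_smul_eq_zero (hb i) ha (not_lt.1 hji), if_pos rfl] at h
  exact Finsupp.mem_support_iff.1 hj (by simpa using h.symm)

end Module.Basis

theorem invariant_coinvariant_algebra_graded_cellular_general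
    {B W : Type*} [Group W] {cm : CoxeterMatrix B} (cs : CoxeterSystem cm W)
    -- the coinvariant algebra C with its grading and W-action
    (C : Type*) [CommRing C] [Algebra ℂ C]
    (𝒜 : ℕ → Submodule ℂ C) [GradedAlgebra 𝒜]
    -- the Schubert basis of C
    (X : Module.Basis W ℂ C)
    (hdeg : ∀ w, X w ∈ 𝒜 (2 * cs.length w))
    -- the parabolic subgroup W_J and the invariant algebra C^J
    (WJ : Subgroup W)
    (CJ : Subalgebra ℂ C)
    -- Lemma cj1: X_w ∈ C^J for w ∈ W^J, and these elements span C^J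
    (hXmem : ∀ w, IsMinLeftCosetRep cs WJ w → X w ∈ CJ)
    (hCJspan : ∀ c ∈ CJ,
      c ∈ Submodule.span ℂ ((fun w => X w) '' {w | IsMinLeftCosetRep cs WJ w})) :
    -- `{X_w : w ∈ W^J}` is a ℂ-basis of C^J ...
    (LinearIndependent ℂ fun w : {w : W // IsMinLeftCosetRep cs WJ w} => X (w : W)) ∧
    (∀ c ∈ CJ,
      c ∈ Submodule.span ℂ ((fun w => X w) '' {w | IsMinLeftCosetRep cs WJ w})) ∧
    -- ... consisting of homogeneous elements, X_w of degree 2ℓ(w) ...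
    (∀ w, IsMinLeftCosetRep cs WJ w → X w ∈ 𝒜 (2 * cs.length w)) ∧
    -- ... which is cellular (poset W^J ordered by length, singleton cells, identity
    -- anti-involution): multiplication is triangular with one-dimensional cell modules
    (∀ a ∈ CJ, ∀ w, IsMinLeftCosetRep cs WJ w →
      ∃ r : ℂ, a * X w - r • X w ∈ Submodule.span ℂ
        ((fun y => X y) ''
          {y | IsMinLeftCosetRep cs WJ y ∧ cs.length w < cs.length y})) := by
  refine ⟨X.linearIndependent.comp _ Subtype.val_injective, hCJspan, fun w _ => hdeg w, ?_⟩
  intro a ha w hw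
  obtain ⟨r, hr⟩ := X.exists_algebraMap_eq_of_mem_zero hdeg
    (fun v hv => cs.length_eq_zero_iff.1 (by omega)) (decompose 𝒜 a 0).2
  have hXw := hXmem w hw
  have hmem := hCJspan _ (sub_mem (mul_mem ha hXw) (CJ.smul_mem hXw r))
  refine ⟨r, X.mem_span_image.2 fun y hy => ⟨X.mem_span_image.1 hmem hy, ?_⟩⟩
  exact Nat.lt_of_mul_lt_mul_left (X.support_repr_mul_sub_smul_subset hdeg hr w hy)

theorem invariant_coinvariant_algebra_graded_cellular
    {B W : Type*} [Group W] [Fintype W] {cm : CoxeterMatrix B} (cs : CoxeterSystem cm W)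
    (w0 : W) (hw0 : ∀ w, cs.length w ≤ cs.length w0)
    -- the coinvariant algebra C with its grading and W-action
    (C : Type*) [CommRing C] [Algebra ℂ C]
    (𝒜 : ℕ → Submodule ℂ C) [GradedAlgebra 𝒜]
    [MulSemiringAction W C] [SMulCommClass W ℂ C]
    (hactdeg : ∀ (g : W) (n : ℕ), ∀ c ∈ 𝒜 n, g • c ∈ 𝒜 n)
    -- the Schubert basis of C
    (X : Module.Basis W ℂ C)
    (hdeg : ∀ w, X w ∈ 𝒜 (2 * cs.length w))
    -- the parabolic subgroup W_J and the invariant algebra C^J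
    (J : Set B) (WJ : Subgroup W) (hWJ : WJ = Subgroup.closure (cs.simple '' J))
    (CJ : Subalgebra ℂ C) (hCJ : ∀ c : C, c ∈ CJ ↔ ∀ g ∈ WJ, g • c = c)
    -- Lemma cj1: X_w ∈ C^J for w ∈ W^J, and these elements span C^J
    (hXmem : ∀ w, IsMinLeftCosetRep cs WJ w → X w ∈ CJ)
    (hCJspan : ∀ c ∈ CJ,
      c ∈ Submodule.span ℂ ((fun w => X w) '' {w | IsMinLeftCosetRep cs WJ w})) :
    -- `{X_w : w ∈ W^J}` is a ℂ-basis of C^J ...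
    (LinearIndependent ℂ fun w : {w : W // IsMinLeftCosetRep cs WJ w} => X (w : W)) ∧
    (∀ c ∈ CJ,
      c ∈ Submodule.span ℂ ((fun w => X w) '' {w | IsMinLeftCosetRep cs WJ w})) ∧
    -- ... consisting of homogeneous elements, X_w of degree 2ℓ(w) ...
    (∀ w, IsMinLeftCosetRep cs WJ w → X w ∈ 𝒜 (2 * cs.length w)) ∧
    -- ... which is cellular (poset W^J ordered by length, singleton cells, identity
    -- anti-involution): multiplication is triangular with one-dimensional cell modules
    (∀ a ∈ CJ, ∀ w, IsMinLeftCosetRep cs WJ w →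
      ∃ r : ℂ, a * X w - r • X w ∈ Submodule.span ℂ
        ((fun y => X y) ''
          {y | IsMinLeftCosetRep cs WJ y ∧ cs.length w < cs.length y})) :=
  invariant_coinvariant_algebra_graded_cellular_general cs C 𝒜 X hdeg WJ CJ hXmem hCJspan
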